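/- arXiv:2602.06267 — 2 statements merged into one kernel-verified Lean document; each statement's English description precedes it below -/
import Mathlib

section
/- Let Ω be a finite set, G a finite group acting on Ω, and S : Ω → ℝ. Define p(x) = (1/|G|) · #{g ∈ G : S(g·x) ≤ S(x)}. Then for every x ∈ Ω and every α ∈ (0,1), the fraction of group elements g ∈ G for which p(g·x) ≤ α is at most α, i.e., (1/|G|) · #{g ∈ G : p(g·x) ≤ α} ≤ α. -/
/-- Deterministic core of super-uniformity of permutation p-values: for a finite group
`G` acting on a finite set `Ω`, a score `S : Ω → ℝ`, and
`p(y) = (1/|G|) · #{g : S(g • y) ≤ S y}`, at most an `α`-fraction of the orbit elements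
`g • x` satisfy `p(g • x) ≤ α`. -/
theorem stmt6 {Ω G : Type*} [Fintype Ω] [Group G] [Fintype G] [MulAction G Ω]
    (S : Ω → ℝ) (x : Ω) (α : ℝ) (hα : α ∈ Set.Ioo (0:ℝ) 1) :
    ((Finset.univ.filter (fun g : G =>
        ((Finset.univ.filter (fun h : G => S (h • (g • x)) ≤ S (g • x))).card : ℝ)
          / (Fintype.card G : ℝ) ≤ α)).card : ℝ)
      / (Fintype.card G : ℝ) ≤ α := by
  obtain ⟨hα0, hα1⟩ := hα
  set A := Finset.univ.filter (fun g : G =>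
      ((Finset.univ.filter (fun h : G => S (h • (g • x)) ≤ S (g • x))).card : ℝ)
        / (Fintype.card G : ℝ) ≤ α) with hA
  have hN : (0:ℝ) < (Fintype.card G : ℝ) := by
    exact_mod_cast Fintype.card_pos
  rcases A.eq_empty_or_nonempty with h | ⟨g₀, hg₀⟩
  · rw [h]; simp; positivity
  · obtain ⟨g₀, hg₀mem, hmax⟩ := A.exists_max_image (fun g => S (g • x)) ⟨g₀, hg₀⟩
    have hg₀ : ((Finset.univ.filter (fun h : G => S (h • (g₀ • x)) ≤ S (g₀ • x))).card : ℝ)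
        / (Fintype.card G : ℝ) ≤ α := (Finset.mem_filter.mp hg₀mem).2
    have hcard : A.card ≤
        (Finset.univ.filter (fun h : G => S (h • (g₀ • x)) ≤ S (g₀ • x))).card := by
      apply Finset.card_le_card_of_injOn (fun g => g * g₀⁻¹)
      · intro g hg
        simp only [Finset.mem_coe, Finset.mem_filter, Finset.mem_univ, true_and]
        rw [smul_smul, inv_mul_cancel_right]
        exact hmax g hg
      · intro a _ b _ hab
        simpa using mul_right_cancel hab
    calc (A.card : ℝ) / (Fintype.card G : ℝ)
        ≤ ((Finset.univ.filter (fun h : G => S (h • (g₀ • x)) ≤ S (g₀ • x))).card : ℝ)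
            / (Fintype.card G : ℝ) := by
          gcongr
      _ ≤ α := hg₀
end

section
/- Let P_0, P_1 be probability measures with densities f_0, f_1 with respect to a common measure, and let ℓ(x) = log(f_0(x)/f_1(x)). Assume 0 < KL(P_1‖P_0) < ∞. Then there exists γ > 0 such that for all k ≥ 1, if X_1,...,X_k are i.i.d. from P_1, then P( (1/k)·Σ_{i=1}^k ℓ(X_i) ≥ −(1/2)·KL(P_1‖P_0) ) ≤ exp(−γ·k). -/
open MeasureTheory

section Aux
open ENNReal Filter

lemma lintegral_pi_pow {E : Type*} [MeasurableSpace E] (μ : Measure E) [SigmaFinite μ]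
    (f : E → ℝ≥0∞) (hf : Measurable f) (k : ℕ) :
    ∫⁻ x : Fin k → E, ∏ i, f (x i) ∂(Measure.pi fun _ => μ) = (∫⁻ x, f x ∂μ) ^ k := by
  induction k with
  | zero => simp
  | succ n ih =>
    have hmp := (measurePreserving_piFinSuccAbove (fun _ : Fin (n+1) => μ) 0).symm
    rw [← hmp.lintegral_comp_emb (MeasurableEquiv.measurableEmbedding _)
      (f := fun x : Fin (n+1) → E => ∏ i, f (x i))]
    simp_rw [MeasurableEquiv.piFinSuccAbove_symm_apply, Fin.insertNthEquiv,
      Fin.prod_univ_succ, Fin.insertNth_zero]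
    simp only [Fin.zero_succAbove, Function.comp_def, Fin.cons_zero, Fin.cons_succ,
      Equiv.coe_fn_mk, cast_eq]
    have hg : AEMeasurable (fun x : Fin n → E => ∏ i, f (x i)) (Measure.pi fun _ => μ) :=
      (Finset.measurable_prod _ fun i _ => hf.comp (measurable_pi_apply i)).aemeasurable
    rw [lintegral_prod_mul hf.aemeasurable hg, ih, pow_succ, mul_comm]

lemma hoelder_aux {X : Type*} [MeasurableSpace X] (ν : Measure X) (f0 f1 : X → ℝ)
    (hf0m : Measurable f0) (hf1m : Measurable f1)
    (hf0 : ∀ x, 0 < f0 x) (hf1 : ∀ x, 0 < f1 x)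
    (h0 : ∫⁻ x, ENNReal.ofReal (f0 x) ∂ν = 1)
    (h1 : ∫⁻ x, ENNReal.ofReal (f1 x) ∂ν = 1) {θ : ℝ} (hθ0 : 0 < θ) (hθ1 : θ < 1) :
    ∫⁻ x, ENNReal.ofReal (Real.exp (θ * Real.log (f0 x / f1 x)))
        ∂(ν.withDensity fun x => ENNReal.ofReal (f1 x)) ≤ 1 := by
  have hmeas : Measurable fun x => ENNReal.ofReal (Real.exp (θ * Real.log (f0 x / f1 x))) := by
    exact (((hf0m.div hf1m).log.const_mul θ).exp).ennreal_ofReal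
  rw [lintegral_withDensity_eq_lintegral_mul ν (by exact hf1m.ennreal_ofReal) hmeas]
  have key : ∀ x, ((fun x => ENNReal.ofReal (f1 x)) *
      fun x => ENNReal.ofReal (Real.exp (θ * Real.log (f0 x / f1 x)))) x
      = ((fun x => ENNReal.ofReal (f0 x) ^ θ) * fun x => ENNReal.ofReal (f1 x) ^ (1 - θ)) x := by
    intro x
    have hx0 := hf0 x; have hx1 := hf1 x
    have hexp : Real.exp (θ * Real.log (f0 x / f1 x)) = (f0 x / f1 x) ^ θ := by
      rw [Real.rpow_def_of_pos (div_pos hx0 hx1), mul_comm]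
    have hreal : f1 x * (f0 x / f1 x) ^ θ = f0 x ^ θ * f1 x ^ (1 - θ) := by
      rw [Real.div_rpow hx0.le hx1.le, Real.rpow_sub hx1, Real.rpow_one]
      field_simp
    simp only [Pi.mul_apply, hexp, ← ENNReal.ofReal_mul hx1.le, hreal,
      ENNReal.ofReal_mul (Real.rpow_nonneg hx0.le θ),
      ENNReal.ofReal_rpow_of_pos hx0, ENNReal.ofReal_rpow_of_pos hx1]
  rw [lintegral_congr key]
  have hpq : (θ⁻¹).HolderConjugate (1 - θ)⁻¹ := by
    rw [Real.holderConjugate_iff]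
    constructor
    · exact (one_lt_inv₀ hθ0).2 hθ1
    · rw [inv_inv, inv_inv]; ring
  calc ∫⁻ x, ((fun x => ENNReal.ofReal (f0 x) ^ θ) * fun x => ENNReal.ofReal (f1 x) ^ (1 - θ)) x ∂ν
      ≤ (∫⁻ x, (ENNReal.ofReal (f0 x) ^ θ) ^ θ⁻¹ ∂ν) ^ (1 / θ⁻¹)
        * (∫⁻ x, (ENNReal.ofReal (f1 x) ^ (1 - θ)) ^ (1 - θ)⁻¹ ∂ν) ^ (1 / (1 - θ)⁻¹) :=
      ENNReal.lintegral_mul_le_Lp_mul_Lq ν hpq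
        (hf0m.ennreal_ofReal.pow_const θ).aemeasurable
        (hf1m.ennreal_ofReal.pow_const (1 - θ)).aemeasurable
    _ ≤ 1 := by
      have e0 : ∀ x : ℝ≥0∞, (x ^ θ) ^ θ⁻¹ = x := fun x => by
        rw [← ENNReal.rpow_mul, mul_inv_cancel₀ hθ0.ne', ENNReal.rpow_one]
      have e1 : ∀ x : ℝ≥0∞, (x ^ (1 - θ)) ^ (1 - θ)⁻¹ = x := fun x => by
        rw [← ENNReal.rpow_mul, mul_inv_cancel₀ (by linarith), ENNReal.rpow_one]
      simp_rw [e0, e1, h0, h1, ENNReal.one_rpow, mul_one]; rfl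

lemma slope_tendsto (c : ℝ) :
    Tendsto (fun θ => (Real.exp (θ * c) - 1) / θ) (nhdsWithin 0 (Set.Ioi 0)) (nhds c) := by
  have h : HasDerivAt (fun θ : ℝ => Real.exp (θ * c)) c 0 := by
    have := (hasDerivAt_mul_const (x := (0:ℝ)) c).exp
    simpa using this
  rw [hasDerivAt_iff_tendsto_slope] at h
  have : Tendsto (slope (fun θ : ℝ => Real.exp (θ * c)) 0) (nhdsWithin 0 (Set.Ioi 0)) (nhds c) :=
    h.mono_left (nhdsWithin_mono _ fun x hx => Set.mem_compl_singleton_iff.2 (ne_of_gt hx))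
  refine this.congr fun θ => ?_
  simp [slope, vsub_eq_sub, div_eq_inv_mul]

lemma abs_slope_bound (c : ℝ) {θ : ℝ} (hθ : θ ∈ Set.Ioc (0:ℝ) (1/2)) :
    |(Real.exp (θ * c) - 1) / θ| ≤ |c| + (4 / Real.exp 1) * Real.exp ((3/4) * c) := by
  obtain ⟨hθ0, hθh⟩ := hθ
  rw [abs_div, abs_of_pos hθ0, div_le_iff₀ hθ0]
  have hepos : (0:ℝ) < Real.exp ((3/4) * c) := Real.exp_pos _
  have he1 : (0:ℝ) < Real.exp 1 := Real.exp_pos _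
  rcases le_or_gt c 0 with hc | hc
  · have h1 : Real.exp (θ * c) ≤ 1 := Real.exp_le_one_iff.2 (mul_nonpos_of_nonneg_of_nonpos hθ0.le hc)
    have h2 : θ * c + 1 ≤ Real.exp (θ * c) := Real.add_one_le_exp _
    have : |Real.exp (θ * c) - 1| = 1 - Real.exp (θ * c) := by
      rw [abs_of_nonpos (by linarith)]; ring
    rw [this]
    have habs : |c| = -c := abs_of_nonpos hc
    nlinarith [mul_pos hθ0 (mul_pos (div_pos (by norm_num : (0:ℝ)<4) he1) hepos)]
  · have h1 : 1 ≤ Real.exp (θ * c) := Real.one_le_exp (by positivity)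
    rw [abs_of_nonneg (by linarith)]
    -- exp y - 1 ≤ y * exp y  for y = θ*c ≥ 0
    have hy : 0 ≤ θ * c := by positivity
    have key1 : Real.exp (θ * c) - 1 ≤ (θ * c) * Real.exp (θ * c) := by
      have := Real.add_one_le_exp (-(θ * c))
      have hpos := Real.exp_pos (θ * c)
      have hinv : Real.exp (-(θ * c)) = (Real.exp (θ * c))⁻¹ := by
        rw [Real.exp_neg]
      rw [hinv] at this
      have := mul_le_mul_of_nonneg_right this hpos.le
      rw [add_mul, inv_mul_cancel₀ hpos.ne'] at this
      nlinarith
    have key2 : Real.exp (θ * c) ≤ Real.exp (c / 2) := by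
      apply Real.exp_le_exp.2
      nlinarith
    have key3 : c ≤ (4 / Real.exp 1) * Real.exp (c / 4) := by
      have := Real.add_one_le_exp (c / 4 - 1)
      rw [Real.exp_sub, le_div_iff₀ he1] at this
      rw [div_mul_eq_mul_div, le_div_iff₀ he1]
      nlinarith [this]
    have key4 : c * Real.exp (c / 2) ≤ (4 / Real.exp 1) * Real.exp ((3/4) * c) := by
      calc c * Real.exp (c / 2) ≤ ((4 / Real.exp 1) * Real.exp (c / 4)) * Real.exp (c / 2) :=
            mul_le_mul_of_nonneg_right key3 (Real.exp_pos _).le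
        _ = (4 / Real.exp 1) * Real.exp ((3/4) * c) := by
            rw [mul_assoc, ← Real.exp_add]; ring_nf
    calc Real.exp (θ * c) - 1 ≤ (θ * c) * Real.exp (θ * c) := key1
      _ ≤ θ * (c * Real.exp (c / 2)) := by
          rw [mul_assoc]
          exact mul_le_mul_of_nonneg_left (mul_le_mul_of_nonneg_left key2 hc.le) hθ0.le
      _ ≤ θ * ((4 / Real.exp 1) * Real.exp ((3/4) * c)) :=
          mul_le_mul_of_nonneg_left key4 hθ0.le
      _ ≤ (|c| + (4 / Real.exp 1) * Real.exp ((3/4) * c)) * θ := by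
          rw [mul_comm]
          have : (0:ℝ) ≤ |c| := abs_nonneg c
          nlinarith

end Aux

/-- Exponential negative-drift bound for i.i.d. log-likelihood-ratio partial sums:
if `ℓ = log (f0 / f1)`, `0 < KL(P1‖P0) < ∞` (KL denoted `D`), then there is `γ > 0`
such that for all `k ≥ 1`, for `X_1,...,X_k` i.i.d. from `P1`,
`P((1/k)·Σ ℓ(X_i) ≥ -(1/2)·D) ≤ exp (-γ k)`. -/
theorem stmt9 {X : Type*} [MeasurableSpace X] (ν : Measure X)
    (f0 f1 : X → ℝ) (hf0m : Measurable f0) (hf1m : Measurable f1)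
    (hf0 : ∀ x, 0 < f0 x) (hf1 : ∀ x, 0 < f1 x)
    (P0 P1 : Measure X)
    (hP0 : P0 = ν.withDensity fun x => ENNReal.ofReal (f0 x))
    (hP1 : P1 = ν.withDensity fun x => ENNReal.ofReal (f1 x))
    [IsProbabilityMeasure P0] [IsProbabilityMeasure P1]
    (ℓ : X → ℝ) (hℓ : ℓ = fun x => Real.log (f0 x / f1 x))
    (hInt : Integrable ℓ P1)
    (D : ℝ) (hD : D = ∫ x, -ℓ x ∂P1) (hDpos : 0 < D) :
    ∃ γ > (0:ℝ), ∀ k : ℕ, 1 ≤ k →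
      (Measure.pi fun _ : Fin k => P1)
          {ω | -(1/2) * D ≤ (1 / (k:ℝ)) * ∑ i, ℓ (ω i)}
        ≤ ENNReal.ofReal (Real.exp (-γ * k)) := by
  have hℓm : Measurable ℓ := by rw [hℓ]; exact (hf0m.div hf1m).log
  have h0 : ∫⁻ x, ENNReal.ofReal (f0 x) ∂ν = 1 := by
    have h := measure_univ (μ := P0)
    rwa [hP0, withDensity_apply _ MeasurableSet.univ, setLIntegral_univ] at h
  have h1 : ∫⁻ x, ENNReal.ofReal (f1 x) ∂ν = 1 := by
    have h := measure_univ (μ := P1)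
    rwa [hP1, withDensity_apply _ MeasurableSet.univ, setLIntegral_univ] at h
  have hHold : ∀ θ : ℝ, 0 < θ → θ < 1 →
      ∫⁻ x, ENNReal.ofReal (Real.exp (θ * ℓ x)) ∂P1 ≤ 1 := by
    intro θ ha hb
    rw [hP1, hℓ]
    exact hoelder_aux ν f0 f1 hf0m hf1m hf0 hf1 h0 h1 ha hb
  have hIntExp : ∀ θ : ℝ, 0 < θ → θ < 1 →
      Integrable (fun x => Real.exp (θ * ℓ x)) P1 := by
    intro θ ha hb
    refine ⟨((hℓm.const_mul θ).exp).aestronglyMeasurable, ?_⟩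
    rw [hasFiniteIntegral_iff_ofReal (Filter.Eventually.of_forall fun x => (Real.exp_pos _).le)]
    exact lt_of_le_of_lt (hHold θ ha hb) ENNReal.one_lt_top
  have hLL : ∀ θ : ℝ, 0 < θ → θ < 1 →
      ∫⁻ x, ENNReal.ofReal (Real.exp (θ * ℓ x)) ∂P1
        = ENNReal.ofReal (∫ x, Real.exp (θ * ℓ x) ∂P1) := by
    intro θ ha hb
    rw [ofReal_integral_eq_lintegral_ofReal (hIntExp θ ha hb)
      (Filter.Eventually.of_forall fun x => (Real.exp_pos _).le)]
  -- limit of difference quotients of the mgf at 0⁺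
  have hTend : Filter.Tendsto (fun θ : ℝ => ∫ x, (Real.exp (θ * ℓ x) - 1) / θ ∂P1)
      (nhdsWithin 0 (Set.Ioi 0)) (nhds (-D)) := by
    have hD' : -D = ∫ x, ℓ x ∂P1 := by
      rw [hD, integral_neg]; ring
    rw [hD']
    refine tendsto_integral_filter_of_dominated_convergence
      (fun x => |ℓ x| + (4 / Real.exp 1) * Real.exp ((3/4) * ℓ x)) ?_ ?_ ?_ ?_
    · exact Filter.Eventually.of_forall fun θ =>
        (((hℓm.const_mul θ).exp.sub measurable_const).div_const θ).aestronglyMeasurable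
    · have hmem : Set.Ioc (0:ℝ) (1/2) ∈ nhdsWithin (0:ℝ) (Set.Ioi 0) :=
        Ioc_mem_nhdsGT_of_mem (by norm_num)
      filter_upwards [hmem] with θ hθ
      exact Filter.Eventually.of_forall fun x => abs_slope_bound (ℓ x) hθ
    · exact hInt.abs.add (((hIntExp (3/4) (by norm_num) (by norm_num))).const_mul _)
    · exact Filter.Eventually.of_forall fun x => slope_tendsto (ℓ x)
  -- choose θ with ∫ exp(θℓ) ≤ 1 - (3/4) D θ
  obtain ⟨θ, hGθ, hθ0, hθh⟩ :
      ∃ θ : ℝ, (∫ x, (Real.exp (θ * ℓ x) - 1) / θ ∂P1) ≤ -(3/4) * D ∧ 0 < θ ∧ θ ≤ 1/2 := by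
    have h1' : ∀ᶠ θ in nhdsWithin (0:ℝ) (Set.Ioi 0),
        (∫ x, (Real.exp (θ * ℓ x) - 1) / θ ∂P1) < -(3/4) * D :=
      hTend.eventually_lt_const (by linarith)
    have h2' : Set.Ioc (0:ℝ) (1/2) ∈ nhdsWithin (0:ℝ) (Set.Ioi 0) :=
      Ioc_mem_nhdsGT_of_mem (by norm_num)
    obtain ⟨θ, hθ1, hθ2⟩ := (h1'.and h2').exists
    exact ⟨θ, hθ1.le, hθ2.1, hθ2.2⟩
  have hθ1 : θ < 1 := by linarith
  have hg : (∫ x, Real.exp (θ * ℓ x) ∂P1) ≤ 1 - (3/4) * D * θ := by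
    have heq : (∫ x, (Real.exp (θ * ℓ x) - 1) / θ ∂P1)
        = ((∫ x, Real.exp (θ * ℓ x) ∂P1) - 1) / θ := by
      rw [integral_div, integral_sub (hIntExp θ hθ0 hθ1) (integrable_const 1),
        integral_const]
      simp
    rw [heq, div_le_iff₀ hθ0] at hGθ
    linarith
  -- lintegral bound
  have hgL : ∫⁻ x, ENNReal.ofReal (Real.exp (θ * ℓ x)) ∂P1
      ≤ ENNReal.ofReal (Real.exp (-(3/4) * D * θ)) := by
    rw [hLL θ hθ0 hθ1]
    refine ENNReal.ofReal_le_ofReal (hg.trans ?_)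
    have := Real.add_one_le_exp (-(3/4) * D * θ)
    linarith
  refine ⟨θ * D / 4, by positivity, ?_⟩
  intro k hk
  set μk := (Measure.pi fun _ : Fin k => P1) with hμk
  set S : (Fin k → X) → ℝ := fun ω => ∑ i, ℓ (ω i) with hS
  have hSm : Measurable S := Finset.measurable_sum _ fun i _ => hℓm.comp (measurable_pi_apply i)
  set F : (Fin k → X) → ENNReal := fun ω => ENNReal.ofReal (Real.exp (θ * S ω)) with hF
  have hFm : Measurable F := ((hSm.const_mul θ).exp).ennreal_ofReal
  have hkpos : (0:ℝ) < k := by exact_mod_cast hk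
  set ε : ENNReal := ENNReal.ofReal (Real.exp (θ * (-(1/2) * D * k))) with hε
  have hsub : {ω : Fin k → X | -(1/2) * D ≤ (1 / (k:ℝ)) * ∑ i, ℓ (ω i)}
      ⊆ {ω | ε ≤ F ω} := by
    intro ω hω
    simp only [Set.mem_setOf_eq] at hω ⊢
    have h1' : -(1/2) * D * k ≤ S ω := by
      have h2' := mul_le_mul_of_nonneg_right hω hkpos.le
      have h3' : 1 / (k:ℝ) * (∑ i, ℓ (ω i)) * k = S ω := by
        rw [hS]; field_simp
      rw [h3'] at h2'
      exact h2'
    exact ENNReal.ofReal_le_ofReal (Real.exp_le_exp.2 (by nlinarith))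
  have hmarkov : ε * μk {ω | ε ≤ F ω} ≤ ∫⁻ ω, F ω ∂μk :=
    mul_meas_ge_le_lintegral₀ hFm.aemeasurable ε
  have hprod : ∫⁻ ω, F ω ∂μk = (∫⁻ x, ENNReal.ofReal (Real.exp (θ * ℓ x)) ∂P1) ^ k := by
    rw [← lintegral_pi_pow P1 (fun x => ENNReal.ofReal (Real.exp (θ * ℓ x)))
      ((hℓm.const_mul θ).exp).ennreal_ofReal k]
    refine lintegral_congr fun ω => ?_
    rw [hF, hS]
    simp only
    rw [Finset.mul_sum, Real.exp_sum, ENNReal.ofReal_prod_of_nonneg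
      (fun i _ => (Real.exp_pos _).le)]
  have hpow : (∫⁻ x, ENNReal.ofReal (Real.exp (θ * ℓ x)) ∂P1) ^ k
      ≤ ENNReal.ofReal (Real.exp (-(3/4) * D * θ * k)) := by
    calc (∫⁻ x, ENNReal.ofReal (Real.exp (θ * ℓ x)) ∂P1) ^ k
        ≤ (ENNReal.ofReal (Real.exp (-(3/4) * D * θ))) ^ k := pow_le_pow_left' hgL k
      _ = ENNReal.ofReal (Real.exp (-(3/4) * D * θ) ^ k) := by
          rw [ENNReal.ofReal_pow (Real.exp_pos _).le]
      _ = ENNReal.ofReal (Real.exp (-(3/4) * D * θ * k)) := by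
          rw [← Real.exp_nat_mul]; ring_nf
  have hεpos : (0:ℝ) < Real.exp (θ * (-(1/2) * D * k)) := Real.exp_pos _
  have hε0 : ε ≠ 0 := by
    rw [hε]; exact (ENNReal.ofReal_pos.2 hεpos).ne'
  have hεtop : ε ≠ ⊤ := ENNReal.ofReal_ne_top
  calc μk {ω : Fin k → X | -(1/2) * D ≤ (1 / (k:ℝ)) * ∑ i, ℓ (ω i)}
      ≤ μk {ω | ε ≤ F ω} := measure_mono hsub
    _ ≤ (∫⁻ ω, F ω ∂μk) / ε := by
        rw [ENNReal.le_div_iff_mul_le (Or.inl hε0) (Or.inl hεtop)]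
        rw [mul_comm]; exact hmarkov
    _ ≤ ENNReal.ofReal (Real.exp (-(3/4) * D * θ * k)) / ε := by
        apply ENNReal.div_le_div_right
        rw [hprod]; exact hpow
    _ = ENNReal.ofReal (Real.exp (-(3/4) * D * θ * k) / Real.exp (θ * (-(1/2) * D * k))) := by
        rw [hε, ENNReal.ofReal_div_of_pos hεpos]
    _ ≤ ENNReal.ofReal (Real.exp (-(θ * D / 4) * k)) := by
        rw [← Real.exp_sub]
        exact ENNReal.ofReal_le_ofReal (Real.exp_le_exp.2 (le_of_eq (by ring)))
end
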